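/- arXiv:1004.0992 — 3 statements merged into one kernel-verified Lean document; each statement's English description precedes it below -/
import Mathlib

section
/- Let g be an element of order q = 2^k (k ≥ 1) in a subgroup G_c of a finite abelian group, with ρ and γ satisfying the affinity condition and ρ(0) = 0, taking values in ℤ_ω. Then the element 2·ρ(g) + ⟨γ(g), g⟩ of ℤ_ω has order dividing q/2. -/
theorem stmt10 {G : Type*} [AddCommGroup G] [Fintype G]
    (ω : ℕ) (hω : 0 < ω)
    (bil : G → G → ZMod ω)
    (hbilL : ∀ a b c : G, bil (a + b) c = bil a c + bil b c)
    (hbilR : ∀ a b c : G, bil a (b + c) = bil a b + bil a c)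
    (Gc : AddSubgroup G)
    (ρ : Gc → ZMod ω) (γ : Gc → G)
    (hρ0 : ρ 0 = 0)
    (haff : ∀ x y : Gc, ρ (y + x) - ρ x - ρ y = bil (γ y) ↑x)
    (g : Gc) (k : ℕ) (hk : 1 ≤ k) (hord : addOrderOf g = 2 ^ k) :
    (2 ^ (k - 1) : ℕ) • (2 • ρ g + bil (γ g) ↑g) = 0 := by
  have h0 : ∀ a : G, bil a 0 = 0 := by
    intro a
    have := hbilR a 0 0
    simp only [add_zero] at this
    linear_combination -this
  have hsmul : ∀ (a b : G) (n : ℕ), bil a (n • b) = n • bil a b := by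
    intro a b n
    induction n with
    | zero => simpa using h0 a
    | succ m ih =>
      rw [succ_nsmul, succ_nsmul, hbilR, ih]
  have key : ∀ n : ℕ, ρ (n • g) = n • ρ g + (n.choose 2) • bil (γ g) ↑g := by
    intro n
    induction n with
    | zero => simpa using hρ0
    | succ m ih =>
      have h1 := haff (m • g) g
      have hcoe : ((m • g : Gc) : G) = m • (g : G) := by simp
      rw [hcoe, hsmul] at h1
      have h2 : ρ (g + m • g) = ρ (m • g) + ρ g + m • bil (γ g) ↑g := by
        linear_combination h1
      rw [add_comm (g : Gc) (m • g)] at h2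
      have harith : (m + 1).choose 2 = m.choose 2 + m := by
        rw [Nat.choose_succ_succ, Nat.choose_one_right, add_comm]
      rw [succ_nsmul, h2, ih, harith, add_nsmul, succ_nsmul, add_nsmul]
      abel
  have hq : (2 ^ k) • g = 0 := by
    rw [← hord]; exact addOrderOf_nsmul_eq_zero g
  have e1 : (2 ^ k) • ρ g + ((2 ^ k).choose 2) • bil (γ g) ↑g = 0 := by
    have h := key (2 ^ k)
    rw [hq, hρ0] at h
    exact h.symm
  have e2 : (2 ^ k) • bil (γ g) ↑g = 0 := by
    have h := hsmul (γ g) (↑g) (2 ^ k)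
    have hz : (2 ^ k : ℕ) • (g : G) = 0 := by
      have : (((2 ^ k) • g : Gc) : G) = 0 := by rw [hq]; rfl
      simpa using this
    rw [hz, h0] at h
    exact h.symm
  -- nat arithmetic facts (no subtraction)
  have hpow : (2 : ℕ) ^ k = 2 * 2 ^ (k - 1) := by
    conv_lhs => rw [← Nat.sub_add_cancel hk]
    rw [pow_succ]; ring
  have Ceq : (2 ^ k).choose 2 + 2 ^ (k - 1) = 2 ^ (k - 1) * 2 ^ k := by
    obtain ⟨t, ht⟩ : ∃ t, 2 ^ (k - 1) = t + 1 :=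
      ⟨2 ^ (k - 1) - 1, by have := Nat.one_le_two_pow (n := k - 1); omega⟩
    rw [Nat.choose_two_right, hpow, ht]
    have h1 : 2 * (t + 1) * (2 * (t + 1) - 1) = 2 * ((t + 1) * (2 * t + 1)) := by
      have h2 : 2 * (t + 1) - 1 = 2 * t + 1 := by omega
      rw [h2]; ring
    rw [h1, Nat.mul_div_cancel_left _ (by norm_num : 0 < 2)]
    ring
  -- move to ring arithmetic in ZMod ω
  set r := ρ g
  set b := bil (γ g) ↑g
  simp only [nsmul_eq_mul] at e1 e2 ⊢
  have Ceqc : ((2 ^ k).choose 2 : ZMod ω) + 2 ^ (k - 1) = 2 ^ (k - 1) * 2 ^ k := by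
    exact_mod_cast congrArg (Nat.cast : ℕ → ZMod ω) Ceq
  have hpowc : (2 : ZMod ω) ^ k = 2 * 2 ^ (k - 1) := by
    exact_mod_cast congrArg (Nat.cast : ℕ → ZMod ω) hpow
  push_cast
  push_cast at e1 e2
  linear_combination e1 + (1 - (2:ZMod ω)^(k-1)) * e2 - b * Ceqc - (r + b) * hpowc
end

section
/- Let H ∈ ℂ^{r×r} be a non-singular matrix whose entries are ω-th roots of unity, D a non-negative real diagonal matrix, and K the set of indices of nonzero diagonal entries of D. Then either there is a computable p_0 such that for all p ≥ p_0, the entrywise-absolute-value matrix |H D^p conj(H)^T| contains a block (maximal indecomposable submatrix) of rank at least 2; or D is pre-uniform (all nonzero diagonal entries equal) and every non-singular submatrix H_{I,K} (with |I| = |K|) is a complex Hadamard matrix. -/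
noncomputable def Complex.abs : AbsoluteValue ℂ ℝ :=
  IsAbsoluteValue.toAbsoluteValue (norm : ℂ → ℝ)

theorem Complex.abs_apply' (z : ℂ) : Complex.abs z = ‖z‖ := rfl

theorem Complex.abs_ofReal (r : ℝ) : Complex.abs (r : ℂ) = |r| := by
  rw [Complex.abs_apply']; simp

theorem Complex.abs_conj (z : ℂ) : Complex.abs ((starRingEnd ℂ) z) = Complex.abs z :=
  Complex.norm_conj z

theorem Complex.sq_abs (z : ℂ) : Complex.abs z ^ 2 = Complex.normSq z := Complex.sq_norm z

theorem Complex.normSq_eq_abs (z : ℂ) : Complex.normSq z = Complex.abs z ^ 2 :=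
  Complex.normSq_eq_norm_sq z

theorem Complex.re_le_abs (z : ℂ) : z.re ≤ Complex.abs z := Complex.re_le_norm z

theorem Complex.abs.sum_le {ι : Type*} (s : Finset ι) (f : ι → ℂ) :
    Complex.abs (∑ i ∈ s, f i) ≤ ∑ i ∈ s, Complex.abs (f i) := norm_sum_le s f

lemma aux_abs_one_of_pow {z : ℂ} {n : ℕ} (hn : 0 < n) (h : z ^ n = 1) :
    Complex.abs z = 1 := by
  have h1 : (Complex.abs z) ^ n = 1 := by
    rw [← map_pow, h, map_one]
  have h0 : 0 ≤ Complex.abs z := Complex.abs.nonneg z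
  rcases lt_trichotomy (Complex.abs z) 1 with hlt | heq | hgt
  · exfalso
    have := pow_lt_one₀ h0 hlt hn.ne'
    rw [h1] at this; exact lt_irrefl 1 this
  · exact heq
  · exfalso
    have := one_lt_pow₀ hgt hn.ne'
    rw [h1] at this; exact lt_irrefl 1 this


lemma aux_eq_abs_of_re_eq {z : ℂ} (h : z.re = Complex.abs z) :
    z = (Complex.abs z : ℂ) := by
  have him : z.im = 0 := by
    have h2 : (Complex.abs z) ^ 2 = z.re ^ 2 + z.im ^ 2 := by
      rw [Complex.sq_abs, Complex.normSq_apply]; ring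
    rw [← h] at h2
    have : z.im ^ 2 = 0 := by linarith
    exact pow_eq_zero_iff (n := 2) (by norm_num) |>.mp this
  apply Complex.ext
  · simpa using h
  · simpa using him

/-- Equality in the triangle inequality: every term is its absolute value times
the common unit direction `u`. -/
lemma aux_triangle_eq {ι : Type*} (s : Finset ι) (f : ι → ℂ)
    (h : Complex.abs (∑ i ∈ s, f i) = ∑ i ∈ s, Complex.abs (f i))
    (hne : (∑ i ∈ s, f i) ≠ 0) :
    ∃ u : ℂ, Complex.abs u = 1 ∧ ∀ i ∈ s, f i = (Complex.abs (f i) : ℂ) * u := by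
  set S := ∑ i ∈ s, f i with hS
  set u : ℂ := S / (Complex.abs S : ℂ) with hu
  have habsS : (0:ℝ) < Complex.abs S := by
    simpa using (Complex.abs.pos hne)
  have huabs : Complex.abs u = 1 := by
    rw [hu, map_div₀, Complex.abs_ofReal, abs_of_pos habsS, div_self habsS.ne']
  refine ⟨u, huabs, ?_⟩
  -- key: Re (conj u * f i) ≤ abs (f i), and the sum of both sides agree
  have hle : ∀ i ∈ s, ((starRingEnd ℂ) u * f i).re ≤ Complex.abs (f i) := by
    intro i _
    calc ((starRingEnd ℂ) u * f i).re ≤ Complex.abs ((starRingEnd ℂ) u * f i) :=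
          Complex.re_le_abs _
      _ = Complex.abs (f i) := by
          rw [map_mul, Complex.abs_conj, huabs, one_mul]
  have hsum : ∑ i ∈ s, ((starRingEnd ℂ) u * f i).re = ∑ i ∈ s, Complex.abs (f i) := by
    have h1 : ((starRingEnd ℂ) u * S).re = Complex.abs S := by
      have : (starRingEnd ℂ) u * S = ((Complex.abs S : ℝ) : ℂ) := by
        rw [hu, map_div₀]
        rw [Complex.conj_ofReal]
        field_simp
        rw [mul_comm ((starRingEnd ℂ) S) S, Complex.mul_conj, Complex.normSq_eq_abs]
        rw [div_eq_iff (by exact_mod_cast habsS.ne' : ((Complex.abs S : ℝ) : ℂ) ≠ 0)]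
        push_cast
        ring
      rw [this]; simp
    calc ∑ i ∈ s, ((starRingEnd ℂ) u * f i).re
        = ((starRingEnd ℂ) u * S).re := by
          rw [hS, Finset.mul_sum, Complex.re_sum]
      _ = Complex.abs S := h1
      _ = ∑ i ∈ s, Complex.abs (f i) := h
  have heach : ∀ i ∈ s, ((starRingEnd ℂ) u * f i).re = Complex.abs (f i) := by
    intro i hi
    by_contra hne'
    have hlt : ((starRingEnd ℂ) u * f i).re < Complex.abs (f i) :=
      lt_of_le_of_ne (hle i hi) hne'
    have : ∑ j ∈ s, ((starRingEnd ℂ) u * f j).re < ∑ j ∈ s, Complex.abs (f j) :=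
      Finset.sum_lt_sum hle ⟨i, hi, hlt⟩
    rw [hsum] at this; exact lt_irrefl _ this
  intro i hi
  have h2 : (starRingEnd ℂ) u * f i = (Complex.abs ((starRingEnd ℂ) u * f i) : ℂ) := by
    apply aux_eq_abs_of_re_eq
    rw [map_mul, Complex.abs_conj, huabs, one_mul]
    exact heach i hi
  have habsmul : Complex.abs ((starRingEnd ℂ) u * f i) = Complex.abs (f i) := by
    rw [map_mul, Complex.abs_conj, huabs, one_mul]
  rw [habsmul] at h2
  have huu : u * (starRingEnd ℂ) u = 1 := by
    rw [Complex.mul_conj]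
    norm_cast
    rw [Complex.normSq_eq_abs, huabs]; norm_num
  calc f i = (u * (starRingEnd ℂ) u) * f i := by rw [huu, one_mul]
    _ = u * ((starRingEnd ℂ) u * f i) := by ring
    _ = u * (Complex.abs (f i) : ℂ) := by rw [h2]
    _ = (Complex.abs (f i) : ℂ) * u := by ring

/-- If a positive-base exponential sum vanishes for arbitrarily large exponents,
then all coefficients vanish. -/
lemma aux_vanish (s : Finset ℝ) :
    ∀ (w : ℝ → ℂ), (∀ v ∈ s, 0 < v) →
    (∀ p0 : ℕ, ∃ p, p0 ≤ p ∧ ∑ v ∈ s, (v : ℂ) ^ p * w v = 0) →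
    ∀ v ∈ s, w v = 0 := by
  induction s using Finset.strongInduction with
  | _ s ih =>
    intro w hpos h v hv
    have hsne : s.Nonempty := ⟨v, hv⟩
    set M := s.max' hsne with hM
    have hMs : M ∈ s := s.max'_mem hsne
    have hMpos : 0 < M := hpos M hMs
    set t := s.erase M with ht
    -- first: w M = 0
    have hwM : w M = 0 := by
      by_contra hwM
      have hwMpos : 0 < Complex.abs (w M) := Complex.abs.pos hwM
      set W : ℝ := ∑ v ∈ t, Complex.abs (w v) with hW
      have hWnn : 0 ≤ W := Finset.sum_nonneg fun _ _ => Complex.abs.nonneg _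
      -- ratio bound
      obtain ⟨ρ, hρ0, hρ1, hρ⟩ : ∃ ρ : ℝ, 0 ≤ ρ ∧ ρ < 1 ∧ ∀ x ∈ t, x ≤ ρ * M := by
        rcases t.eq_empty_or_nonempty with hte | htne
        · exact ⟨0, le_refl 0, one_pos, by simp [hte]⟩
        · refine ⟨t.max' htne / M, ?_, ?_, ?_⟩
          · have : 0 < t.max' htne := hpos _ (Finset.mem_of_mem_erase (t.max'_mem htne))
            positivity
          · rw [div_lt_one hMpos]
            have h1 : t.max' htne ∈ t := t.max'_mem htne
            have h2 : t.max' htne ≤ M := s.le_max' _ (Finset.mem_of_mem_erase h1)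
            have h3 : t.max' htne ≠ M := Finset.ne_of_mem_erase h1
            exact lt_of_le_of_ne h2 h3
          · intro x hx
            have : x ≤ t.max' htne := t.le_max' x hx
            rw [div_mul_cancel₀ _ hMpos.ne']
            exact this
      -- each good p gives: |w M| ≤ ρ^p * W
      have hbound : ∀ p : ℕ, (∑ v ∈ s, (v : ℂ) ^ p * w v = 0) →
          Complex.abs (w M) ≤ ρ ^ p * W := by
        intro p hp
        have hsplit : (M : ℂ) ^ p * w M + ∑ v ∈ t, (v : ℂ) ^ p * w v = 0 := by
          rw [← Finset.add_sum_erase s _ hMs] at hp; exact hp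
        have : (M : ℂ) ^ p * w M = -∑ v ∈ t, (v : ℂ) ^ p * w v := by
          linear_combination hsplit
        have habs : M ^ p * Complex.abs (w M) ≤ ρ ^ p * M ^ p * W := by
          have h1 : Complex.abs ((M : ℂ) ^ p * w M) = M ^ p * Complex.abs (w M) := by
            rw [map_mul, map_pow, Complex.abs_ofReal, abs_of_pos hMpos]
          calc M ^ p * Complex.abs (w M) = Complex.abs ((M : ℂ) ^ p * w M) := h1.symm
            _ = Complex.abs (∑ v ∈ t, (v : ℂ) ^ p * w v) := by rw [this, map_neg_eq_map]
            _ ≤ ∑ v ∈ t, Complex.abs ((v : ℂ) ^ p * w v) := Complex.abs.sum_le _ _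
            _ ≤ ∑ v ∈ t, (ρ * M) ^ p * Complex.abs (w v) := by
                apply Finset.sum_le_sum
                intro x hx
                rw [map_mul, map_pow, Complex.abs_ofReal]
                have hx0 : 0 < x := hpos x (Finset.mem_of_mem_erase hx)
                rw [abs_of_pos hx0]
                apply mul_le_mul_of_nonneg_right _ (Complex.abs.nonneg _)
                exact pow_le_pow_left₀ hx0.le (hρ x hx) p
            _ = ρ ^ p * M ^ p * W := by rw [hW, Finset.mul_sum, mul_pow]
        have hMp : (0:ℝ) < M ^ p := pow_pos hMpos p
        nlinarith [habs, hMp]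
      -- choose p beating the bound
      obtain ⟨N, hN⟩ : ∃ N : ℕ, ∀ p ≥ N, ρ ^ p * W < Complex.abs (w M) := by
        have htend : Filter.Tendsto (fun p : ℕ => ρ ^ p * W) Filter.atTop (nhds 0) := by
          simpa using (tendsto_pow_atTop_nhds_zero_of_lt_one hρ0 hρ1).mul_const W
        have := htend.eventually (eventually_lt_nhds hwMpos)
        rcases (Filter.eventually_atTop).mp this with ⟨N, hN⟩
        exact ⟨N, hN⟩
      obtain ⟨p, hpN, hp0⟩ := h N
      exact absurd (hbound p hp0) (not_le.mpr (hN p hpN))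
    -- now reduce to the erased set
    have ht' : ∀ p0 : ℕ, ∃ p, p0 ≤ p ∧ ∑ v ∈ t, (v : ℂ) ^ p * w v = 0 := by
      intro p0
      obtain ⟨p, hp1, hp2⟩ := h p0
      refine ⟨p, hp1, ?_⟩
      rw [← Finset.add_sum_erase s _ hMs] at hp2
      rw [hwM, mul_zero, zero_add] at hp2
      exact hp2
    rcases eq_or_ne v M with hvM | hvM
    · rw [hvM]; exact hwM
    · exact ih t (Finset.erase_ssubset hMs) w
        (fun x hx => hpos x (Finset.mem_of_mem_erase hx)) ht' v
        (Finset.mem_erase.mpr ⟨hvM, hv⟩)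

/-- If some 2×2 "minor" is nonsingular, the rank is at least 2. -/
lemma aux_two_le_rank {n : Type*} [Fintype n] [DecidableEq n]
    (N : Matrix n n ℝ) (i j : n) (hij : i ≠ j)
    (h : N i i * N j j ≠ N i j * N j i) : 2 ≤ N.rank := by
  set u : n → ℝ := fun x => N x i with hu
  set v : n → ℝ := fun x => N x j with hv
  have hdet : N i i * N j j - N i j * N j i ≠ 0 := sub_ne_zero.mpr h
  have hind : LinearIndependent ℝ ![u, v] := by
    rw [LinearIndependent.pair_iff]
    intro s t hst
    have h1 : s * N i i + t * N i j = 0 := by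
      have := congrFun hst i
      simpa [hu, hv] using this
    have h2 : s * N j i + t * N j j = 0 := by
      have := congrFun hst j
      simpa [hu, hv] using this
    have hs : s * (N i i * N j j - N i j * N j i) = 0 := by
      linear_combination N j j * h1 - N i j * h2
    have ht : t * (N i i * N j j - N i j * N j i) = 0 := by
      linear_combination N i i * h2 - N j i * h1
    exact ⟨by rcases mul_eq_zero.mp hs with h' | h'; exact h'; exact absurd h' hdet,
           by rcases mul_eq_zero.mp ht with h' | h'; exact h'; exact absurd h' hdet⟩
  have hmem : ∀ x ∈ Set.range ![u, v], x ∈ LinearMap.range N.mulVecLin := by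
    intro x hx
    rcases hx with ⟨c, rfl⟩
    fin_cases c
    · exact ⟨Pi.single i 1, by simp [Matrix.mulVecLin_apply, Matrix.mulVec_single, hu]; rfl⟩
    · exact ⟨Pi.single j 1, by simp [Matrix.mulVecLin_apply, Matrix.mulVec_single, hv]; rfl⟩
  have hspan : Submodule.span ℝ (Set.range ![u, v]) ≤ LinearMap.range N.mulVecLin :=
    Submodule.span_le.mpr hmem
  have h2' : Module.finrank ℝ (Submodule.span ℝ (Set.range ![u, v])) = 2 := by
    rw [finrank_span_eq_card hind]
    simp
  rw [Matrix.rank, ← h2']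
  exact Submodule.finrank_mono hspan

/-- If `N` has injective `mulVec` (full column rank) and all rows lie in the
span of a family indexed by `Q`, then the number of columns is at most `|Q|`. -/
lemma aux_cols_le_classes {n : Type*} [Fintype n] [DecidableEq n] {ι : Type*}
    [Fintype ι] [DecidableEq ι] (N : Matrix n ι ℂ) (hinj : Function.Injective N.mulVec)
    {Q : Type*} [Fintype Q]
    (g : Q → (ι → ℂ))
    (hg : ∀ x : n, N x ∈ Submodule.span ℂ (Set.range g)) :
    Fintype.card ι ≤ Fintype.card Q := by
  classical
  have hinj' : Function.Injective N.mulVecLin := by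
    intro x y hxy
    exact hinj (by simpa [Matrix.mulVecLin_apply] using hxy)
  have h1 : N.rank = Fintype.card ι := by
    rw [Matrix.rank, LinearMap.finrank_range_of_inj hinj',
      Module.finrank_fintype_fun_eq_card]
  have h2 : (N.transpose).rank =
      Module.finrank ℂ (Submodule.span ℂ (Set.range N)) := by
    rw [Matrix.rank, Matrix.range_mulVecLin]; rfl
  have h3 : Submodule.span ℂ (Set.range N) ≤ Submodule.span ℂ (Set.range g) := by
    rw [Submodule.span_le]
    rintro x ⟨y, rfl⟩
    exact hg y
  have h4 : Module.finrank ℂ (Submodule.span ℂ (Set.range g)) ≤ Fintype.card Q := by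
    have := finrank_span_le_card (R := ℂ) (Set.range g)
    calc Module.finrank ℂ (Submodule.span ℂ (Set.range g)) ≤ (Set.range g).toFinset.card := this
      _ ≤ Fintype.card Q := by
          rw [Set.toFinset_range]
          exact le_trans (Finset.card_image_le) (by simp)
  calc Fintype.card ι = N.transpose.rank := by rw [Matrix.rank_transpose, h1]
    _ = Module.finrank ℂ (Submodule.span ℂ (Set.range N)) := h2
    _ ≤ Module.finrank ℂ (Submodule.span ℂ (Set.range g)) := Submodule.finrank_mono h3
    _ ≤ Fintype.card Q := h4

/-- Pairwise orthogonal vectors of equal positive square norm are at most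
`dim` many. -/
lemma aux_classes_le_card {ι : Type*} [Fintype ι] [Nonempty ι] {Q : Type*} [Fintype Q]
    (F : Q → (ι → ℂ))
    (hdiag : ∀ q, ∑ k, F q k * (starRingEnd ℂ) (F q k) = (Fintype.card ι : ℂ))
    (horth : ∀ q q', q ≠ q' → ∑ k, F q k * (starRingEnd ℂ) (F q' k) = 0) :
    Fintype.card Q ≤ Fintype.card ι := by
  classical
  have hind : LinearIndependent ℂ F := by
    rw [Fintype.linearIndependent_iff]
    intro a ha q0
    have h0 : ∑ k, (∑ q, a q • F q) k * (starRingEnd ℂ) (F q0 k) = 0 := by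
      rw [ha]; simp
    have h1 : ∑ q, a q * (∑ k, F q k * (starRingEnd ℂ) (F q0 k)) = 0 := by
      have hterm : ∀ k, (∑ q, a q • F q) k * (starRingEnd ℂ) (F q0 k)
           = ∑ q, a q * (F q k * (starRingEnd ℂ) (F q0 k)) := by
        intro k
        rw [Finset.sum_apply, Finset.sum_mul]
        apply Finset.sum_congr rfl; intro q _; simp [mul_assoc]
      calc ∑ q, a q * (∑ k, F q k * (starRingEnd ℂ) (F q0 k))
          = ∑ q, ∑ k, a q * (F q k * (starRingEnd ℂ) (F q0 k)) := by
            simp [Finset.mul_sum]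
        _ = ∑ k, ∑ q, a q * (F q k * (starRingEnd ℂ) (F q0 k)) := Finset.sum_comm
        _ = ∑ k, (∑ q, a q • F q) k * (starRingEnd ℂ) (F q0 k) := by
            apply Finset.sum_congr rfl; intro k _; rw [hterm k]
        _ = 0 := h0
    have h2 : ∑ q, a q * (∑ k, F q k * (starRingEnd ℂ) (F q0 k)) =
        a q0 * (Fintype.card ι : ℂ) := by
      rw [Finset.sum_eq_single q0]
      · rw [hdiag]
      · intro q _ hq
        rw [horth q q0 hq, mul_zero]
      · intro hq; exact absurd (Finset.mem_univ q0) hq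
    have hcard : (Fintype.card ι : ℂ) ≠ 0 := by
      simp [Fintype.card_ne_zero]
    have := h2.symm.trans h1
    exact (mul_eq_zero.mp this).resolve_right hcard
  have := hind.fintype_card_le_finrank
  rwa [Module.finrank_fintype_fun_eq_card] at this

def MatDecomposable {α β : Type*} (M : Matrix α β ℝ) : Prop :=
  ∃ (I : Set α) (J : Set β), I.Nonempty ∧ J.Nonempty ∧
    ¬ (I = Set.univ ∧ J = Set.univ) ∧
    ∀ i j, ((i ∉ I ∧ j ∈ J) ∨ (i ∈ I ∧ j ∉ J)) → M i j = 0

def IsBlock {r : ℕ} (M : Matrix (Fin r) (Fin r) ℝ) (I J : Finset (Fin r)) : Prop :=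
  ¬ MatDecomposable (M.submatrix (fun i : I => (i : Fin r)) (fun j : J => (j : Fin r))) ∧
  ∀ I' J' : Finset (Fin r), I ⊆ I' → J ⊆ J' →
    ¬ MatDecomposable (M.submatrix (fun i : I' => (i : Fin r)) (fun j : J' => (j : Fin r))) →
    I = I' ∧ J = J'

/-- The connected component (for the support graph) of a symmetric matrix with
nowhere-zero diagonal is a block. -/
lemma aux_isBlock_component {r : ℕ} (M : Matrix (Fin r) (Fin r) ℝ)
    (hsymm : ∀ x y, M x y = M y x) (hdiag : ∀ x, M x x ≠ 0)
    (i : Fin r) (C : Finset (Fin r))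
    (hC : ∀ x, x ∈ C ↔ Relation.ReflTransGen (fun a b => M a b ≠ 0) i x) :
    IsBlock M C C := by
  set E : Fin r → Fin r → Prop := fun a b => M a b ≠ 0 with hE
  have hEsymm : ∀ {a b}, E a b → E b a := by
    intro a b hab
    rw [hE]; dsimp only
    rw [hsymm]; exact hab
  have hclosure : ∀ {x y}, x ∈ C → E x y → y ∈ C := by
    intro x y hx hxy
    rw [hC] at hx ⊢
    exact hx.tail hxy
  have hCi : i ∈ C := (hC i).mpr Relation.ReflTransGen.refl
  have hzero1 : ∀ {x y}, x ∈ C → y ∉ C → M x y = 0 := by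
    intro x y hx hy
    by_contra hne
    exact hy (hclosure hx hne)
  have hzero2 : ∀ {x y}, x ∈ C → y ∉ C → M y x = 0 := by
    intro x y hx hy
    rw [hsymm]; exact hzero1 hx hy
  constructor
  · -- indecomposable
    rintro ⟨I, J, ⟨a, haI⟩, hJne, hnotuniv, hzero⟩
    have hIJ : I = J := by
      ext x
      constructor
      · intro hxI
        by_contra hxJ
        exact hdiag x.val (hzero x x (Or.inr ⟨hxI, hxJ⟩))
      · intro hxJ
        by_contra hxI
        exact hdiag x.val (hzero x x (Or.inl ⟨hxI, hxJ⟩))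
    have hInotuniv : I ≠ Set.univ := by
      intro h
      exact hnotuniv ⟨h, hIJ ▸ h⟩
    obtain ⟨b, hbI⟩ : ∃ b : {x // x ∈ C}, b ∉ I := by
      by_contra hall
      push_neg at hall
      exact hInotuniv (Set.eq_univ_iff_forall.mpr hall)
    -- propagate membership in I along paths
    set P : Fin r → Prop := fun x => ∃ hx : x ∈ C, (⟨x, hx⟩ : {x // x ∈ C}) ∈ I with hP
    have hstep : ∀ {x y}, P x → E x y → P y := by
      rintro x y ⟨hxC, hxI⟩ hxy
      have hyC : y ∈ C := hclosure hxC hxy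
      refine ⟨hyC, ?_⟩
      by_contra hyI
      have := hzero ⟨x, hxC⟩ ⟨y, hyC⟩ (Or.inr ⟨hxI, hIJ ▸ hyI⟩)
      exact hxy this
    have hprop : ∀ {u w}, Relation.ReflTransGen E u w → P u → P w := by
      intro u w h
      induction h with
      | refl => exact id
      | tail _ e ih => exact fun hu => hstep (ih hu) e
    have hab : Relation.ReflTransGen E a.val b.val := by
      have h1 : Relation.ReflTransGen E i a.val := (hC _).mp a.property
      have h2 : Relation.ReflTransGen E i b.val := (hC _).mp b.property
      have h1' : Relation.ReflTransGen E a.val i :=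
        (@Relation.ReflTransGen.stdSymm _ E ⟨fun x y h => hEsymm h⟩).symm _ _ h1
      exact h1'.trans h2
    have : P b.val := hprop hab ⟨a.property, by
      have : (⟨a.val, a.property⟩ : {x // x ∈ C}) = a := Subtype.ext rfl
      rw [this]; exact haI⟩
    obtain ⟨hbC, hbI'⟩ := this
    have : (⟨b.val, hbC⟩ : {x // x ∈ C}) = b := Subtype.ext rfl
    rw [this] at hbI'
    exact hbI hbI'
  · -- maximality
    intro I' J' hII' hJJ' hnotdec
    by_contra hne
    apply hnotdec
    refine ⟨{x : {x // x ∈ I'} | x.val ∈ C}, {y : {y // y ∈ J'} | y.val ∈ C}, ?_, ?_, ?_, ?_⟩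
    · exact ⟨⟨i, hII' hCi⟩, hCi⟩
    · exact ⟨⟨i, hJJ' hCi⟩, hCi⟩
    · rintro ⟨hIu, hJu⟩
      apply hne
      constructor
      · apply Finset.Subset.antisymm hII'
        intro x hx
        have : (⟨x, hx⟩ : {x // x ∈ I'}) ∈ {x : {x // x ∈ I'} | x.val ∈ C} := by
          rw [hIu]; trivial
        exact this
      · apply Finset.Subset.antisymm hJJ'
        intro y hy
        have : (⟨y, hy⟩ : {y // y ∈ J'}) ∈ {y : {y // y ∈ J'} | y.val ∈ C} := by
          rw [hJu]; trivial
        exact this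
    · rintro x y (⟨hxn, hyin⟩ | ⟨hxin, hyn⟩)
      · exact hzero2 hyin hxn
      · exact hzero1 hxin hyn

theorem stmt15 (r ω : ℕ) (hω : 0 < ω)
    (H : Matrix (Fin r) (Fin r) ℂ)
    (hroots : ∀ i j, (H i j) ^ ω = 1)
    (hns : H.det ≠ 0)
    (d : Fin r → ℝ) (hd : ∀ k, 0 ≤ d k) :
    (∃ p0 : ℕ, ∀ p ≥ p0, ∃ I J : Finset (Fin r),
        IsBlock (fun i j => norm
          ((H * Matrix.diagonal (fun k => ((d k : ℂ)) ^ p) * H.conjTranspose) i j)) I J ∧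
        2 ≤ Matrix.rank (Matrix.submatrix
          ((fun i j => norm
            ((H * Matrix.diagonal (fun k => ((d k : ℂ)) ^ p) * H.conjTranspose) i j) :
              Matrix (Fin r) (Fin r) ℝ))
          (fun i : I => (i : Fin r)) (fun j : J => (j : Fin r)))) ∨
    ((∃ u : ℝ, ∀ k, d k = 0 ∨ d k = u) ∧
      ∀ I : Finset (Fin r),
        I.card = (Finset.univ.filter (fun k => d k ≠ 0)).card →
        LinearIndependent ℂ
          (fun i : I => fun k : (Finset.univ.filter (fun k => d k ≠ 0) : Finset (Fin r)) =>
            H (i : Fin r) (k : Fin r)) →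
        (H.submatrix (fun i : I => (i : Fin r))
            (fun k : (Finset.univ.filter (fun k => d k ≠ 0) : Finset (Fin r)) => (k : Fin r))) *
          (H.submatrix (fun i : I => (i : Fin r))
            (fun k : (Finset.univ.filter (fun k => d k ≠ 0) : Finset (Fin r)) =>
              (k : Fin r))).conjTranspose =
          (((Finset.univ.filter (fun k => d k ≠ 0)).card : ℂ)) • 1) := by
  classical
  by_cases hL : (∃ p0 : ℕ, ∀ p ≥ p0, ∃ I J : Finset (Fin r),
        IsBlock (fun i j => Complex.abs
          ((H * Matrix.diagonal (fun k => ((d k : ℂ)) ^ p) * H.conjTranspose) i j)) I J ∧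
        2 ≤ Matrix.rank (Matrix.submatrix
          ((fun i j => Complex.abs
            ((H * Matrix.diagonal (fun k => ((d k : ℂ)) ^ p) * H.conjTranspose) i j) :
              Matrix (Fin r) (Fin r) ℝ))
          (fun i : I => (i : Fin r)) (fun j : J => (j : Fin r))))
  · exact Or.inl hL
  right
  push_neg at hL
  set K : Finset (Fin r) := Finset.filter (fun k => d k ≠ 0) Finset.univ with hKdef
  -- basic facts about entries of H
  have habs1 : ∀ i k, Complex.abs (H i k) = 1 := fun i k =>
    aux_abs_one_of_pow hω (hroots i k)
  have hH0 : ∀ i k, H i k ≠ 0 := by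
    intro i k h
    have := habs1 i k
    rw [h] at this
    simp at this
  have hmulconj : ∀ i k, H i k * (starRingEnd ℂ) (H i k) = 1 := by
    intro i k
    rw [Complex.mul_conj]
    norm_cast
    rw [Complex.normSq_eq_abs, habs1]
    norm_num
  -- trivial case : no nonzero diagonal entries
  by_cases hKe : K = ∅
  · constructor
    · refine ⟨0, fun k => Or.inl ?_⟩
      by_contra h
      have : k ∈ K := by rw [hKdef]; simp [h]
      rw [hKe] at this
      exact Finset.notMem_empty k this
    · intro I hI _
      have hI0 : I = ∅ := Finset.card_eq_zero.mp (by rw [hI, hKe, Finset.card_empty])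
      apply Matrix.ext
      intro i _
      exfalso
      have h2 := i.2
      simp only [hI0, Finset.notMem_empty] at h2
  have hKne : K.Nonempty := Finset.nonempty_iff_ne_empty.mpr hKe
  have hdK : ∀ k ∈ K, 0 < d k := by
    intro k hk
    rw [hKdef, Finset.mem_filter] at hk
    exact lt_of_le_of_ne (hd k) (Ne.symm hk.2)
  -- proportionality relation
  set P : Fin r → Fin r → Prop := fun i j => ∃ z : ℂ, ∀ k ∈ K, H i k = z * H j k
    with hPdef
  have hPrefl : ∀ i, P i i := fun i => ⟨1, fun k _ => by rw [one_mul]⟩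
  have hPsymm : ∀ {i j}, P i j → P j i := by
    rintro i j ⟨z, hz⟩
    obtain ⟨k0, hk0⟩ := hKne
    have hz0 : z ≠ 0 := by
      intro h
      apply hH0 i k0
      rw [hz k0 hk0, h, zero_mul]
    refine ⟨z⁻¹, fun k hk => ?_⟩
    rw [hz k hk]
    field_simp
  have hPtrans : ∀ {i j l}, P i j → P j l → P i l := by
    rintro i j l ⟨z1, hz1⟩ ⟨z2, hz2⟩
    exact ⟨z1 * z2, fun k hk => by rw [hz1 k hk, hz2 k hk]; ring⟩
  -- entry formula
  have hA : ∀ p : ℕ, 1 ≤ p → ∀ i j,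
      (H * Matrix.diagonal (fun k => ((d k : ℂ)) ^ p) * H.conjTranspose) i j =
        ∑ k ∈ K, ((d k ^ p : ℝ) : ℂ) * (H i k * (starRingEnd ℂ) (H j k)) := by
    intro p hp i j
    rw [Matrix.mul_apply]
    have h1 : ∀ k, (H * Matrix.diagonal (fun k => ((d k : ℂ)) ^ p)) i k *
        H.conjTranspose k j = ((d k ^ p : ℝ) : ℂ) * (H i k * (starRingEnd ℂ) (H j k)) := by
      intro k
      rw [Matrix.mul_diagonal, Matrix.conjTranspose_apply, Complex.star_def]
      push_cast
      ring
    rw [Finset.sum_congr rfl (fun k _ => h1 k)]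
    rw [← Finset.sum_subset (Finset.subset_univ K)]
    intro k _ hk
    have hdk : d k = 0 := by
      by_contra h
      exact hk (by rw [hKdef]; simp [h])
    rw [hdk, zero_pow (by omega : p ≠ 0)]
    push_cast
    ring
  -- diagonal entries
  have hcpos : ∀ p : ℕ, 0 < ∑ k ∈ K, d k ^ p := by
    intro p
    exact Finset.sum_pos (fun k hk => pow_pos (hdK k hk) p) hKne
  have hdiagA : ∀ p : ℕ, 1 ≤ p → ∀ i,
      (H * Matrix.diagonal (fun k => ((d k : ℂ)) ^ p) * H.conjTranspose) i i =
        ((∑ k ∈ K, d k ^ p : ℝ) : ℂ) := by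
    intro p hp i
    rw [hA p hp]
    rw [Finset.sum_congr rfl (fun k _ => by rw [hmulconj, mul_one])]
    push_cast
    rfl
  have hsymmA : ∀ p : ℕ, 1 ≤ p → ∀ i j,
      (H * Matrix.diagonal (fun k => ((d k : ℂ)) ^ p) * H.conjTranspose) j i =
        (starRingEnd ℂ) ((H * Matrix.diagonal (fun k => ((d k : ℂ)) ^ p) * H.conjTranspose) i j) := by
    intro p hp i j
    rw [hA p hp, hA p hp, map_sum]
    apply Finset.sum_congr rfl
    intro k _
    rw [map_mul, map_mul, Complex.conj_ofReal, Complex.conj_conj]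
    ring
  -- S1 : the key analytic step
  have key : ∀ p : ℕ, 1 ≤ p →
      (∀ I J : Finset (Fin r),
        IsBlock (fun i j => Complex.abs
          ((H * Matrix.diagonal (fun k => ((d k : ℂ)) ^ p) * H.conjTranspose) i j)) I J →
        (Matrix.submatrix (fun i j => Complex.abs
          ((H * Matrix.diagonal (fun k => ((d k : ℂ)) ^ p) * H.conjTranspose) i j))
          (fun i : ↥I => (i : Fin r)) (fun j : ↥J => (j : Fin r))).rank < 2) →
      ∀ i j, ¬ P i j →
      (H * Matrix.diagonal (fun k => ((d k : ℂ)) ^ p) * H.conjTranspose) i j = 0 := by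
    intro p hp hfail i j hPij
    by_contra hAne
    set Mp : Matrix (Fin r) (Fin r) ℝ := fun x y => Complex.abs
      ((H * Matrix.diagonal (fun k => ((d k : ℂ)) ^ p) * H.conjTranspose) x y) with hMpdef
    have hMpdiag : ∀ x, Mp x x = ∑ k ∈ K, d k ^ p := by
      intro x
      rw [hMpdef]
      dsimp only
      rw [hdiagA p hp, Complex.abs_ofReal, abs_of_pos (hcpos p)]
    have hMpdiag0 : ∀ x, Mp x x ≠ 0 := fun x => by
      rw [hMpdiag]; exact (hcpos p).ne'
    have hMpsymm : ∀ x y, Mp x y = Mp y x := by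
      intro x y
      rw [hMpdef]
      dsimp only
      rw [hsymmA p hp y x, Complex.abs_conj]
    set C : Finset (Fin r) :=
      Finset.univ.filter (Relation.ReflTransGen (fun a b => Mp a b ≠ 0) i) with hCdef
    have hC : ∀ x, x ∈ C ↔ Relation.ReflTransGen (fun a b => Mp a b ≠ 0) i x := by
      intro x
      rw [hCdef, Finset.mem_filter]
      simp
    have hblock := aux_isBlock_component Mp hMpsymm hMpdiag0 i C hC
    have hrank := hfail C C hblock
    have hiC : i ∈ C := (hC i).mpr Relation.ReflTransGen.refl
    have hedge : Mp i j ≠ 0 := by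
      rw [hMpdef]
      dsimp only
      simpa using hAne
    have hjC : j ∈ C := (hC j).mpr (Relation.ReflTransGen.refl.tail hedge)
    -- the block has rank < 2, so the 2×2 minor is singular
    have hnot2 : ¬ 2 ≤ (Mp.submatrix (fun x : ↥C => (x : Fin r))
        (fun y : ↥C => (y : Fin r))).rank := not_le.mpr hrank
    have hentry : Mp i j = ∑ k ∈ K, d k ^ p := by
      by_contra hne2
      apply hnot2
      apply aux_two_le_rank _ (⟨i, hiC⟩ : ↥C) (⟨j, hjC⟩ : ↥C)
        (by
          intro h
          have hij : i = j := congrArg Subtype.val h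
          exact hPij (hij ▸ hPrefl i))
      show Mp i i * Mp j j ≠ Mp i j * Mp j i
      rw [hMpdiag i, hMpdiag j, ← hMpsymm i j]
      intro heq
      apply hne2
      have hnn : 0 ≤ Mp i j := by
        rw [hMpdef]
        exact Complex.abs.nonneg _
      nlinarith [hcpos p, heq, hnn]
    -- equality in the triangle inequality
    have hterm_abs : ∀ k ∈ K, Complex.abs (((d k ^ p : ℝ) : ℂ) *
        (H i k * (starRingEnd ℂ) (H j k))) = d k ^ p := by
      intro k hk
      rw [map_mul, map_mul, Complex.abs_ofReal, Complex.abs_conj, habs1, habs1,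
        abs_of_pos (pow_pos (hdK k hk) p)]
      ring
    have htri : Complex.abs (∑ k ∈ K, ((d k ^ p : ℝ) : ℂ) *
        (H i k * (starRingEnd ℂ) (H j k))) =
        ∑ k ∈ K, Complex.abs (((d k ^ p : ℝ) : ℂ) * (H i k * (starRingEnd ℂ) (H j k))) := by
      rw [Finset.sum_congr rfl hterm_abs, ← hA p hp]
      have : Mp i j = Complex.abs ((H * Matrix.diagonal (fun k => ((d k : ℂ)) ^ p) *
          H.conjTranspose) i j) := rfl
      rw [← this, hentry]
    have hsum_ne : (∑ k ∈ K, ((d k ^ p : ℝ) : ℂ) *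
        (H i k * (starRingEnd ℂ) (H j k))) ≠ 0 := by
      rw [← hA p hp]
      exact hAne
    obtain ⟨u, _, hu⟩ := aux_triangle_eq K _ htri hsum_ne
    apply hPij
    refine ⟨u, fun k hk => ?_⟩
    have h1 := hu k hk
    rw [hterm_abs k hk] at h1
    have hdkp : ((d k ^ p : ℝ) : ℂ) ≠ 0 := by
      norm_cast
      exact (pow_pos (hdK k hk) p).ne'
    have h2 : H i k * (starRingEnd ℂ) (H j k) = u :=
      mul_left_cancel₀ hdkp h1
    calc H i k = H i k * ((starRingEnd ℂ) (H j k) * H j k) := by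
          rw [mul_comm ((starRingEnd ℂ) (H j k)) (H j k), hmulconj, mul_one]
      _ = (H i k * (starRingEnd ℂ) (H j k)) * H j k := by ring
      _ = u * H j k := by rw [h2]
  -- S2 : per-fiber orthogonality
  have hfiber : ∀ i j, ¬ P i j → ∀ v ∈ K.image d,
      (∑ k ∈ K.filter (fun k => d k = v), H i k * (starRingEnd ℂ) (H j k)) = 0 := by
    intro i j hPij
    apply aux_vanish (K.image d)
      (fun v => ∑ k ∈ K.filter (fun k => d k = v), H i k * (starRingEnd ℂ) (H j k))
    · intro v hv
      obtain ⟨k, hk, rfl⟩ := Finset.mem_image.mp hv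
      exact hdK k hk
    · intro p0
      obtain ⟨p, hp0, hp2⟩ := hL (max p0 1)
      have hp1 : 1 ≤ p := le_trans (le_max_right p0 1) hp0
      have hzero := key p hp1 hp2 i j hPij
      refine ⟨p, le_trans (le_max_left p0 1) hp0, ?_⟩
      have hstep : ∀ v ∈ K.image d,
          (v : ℂ) ^ p * (∑ k ∈ K.filter (fun k => d k = v), H i k * (starRingEnd ℂ) (H j k)) =
          ∑ k ∈ K.filter (fun k => d k = v),
            ((d k ^ p : ℝ) : ℂ) * (H i k * (starRingEnd ℂ) (H j k)) := by
        intro v _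
        rw [Finset.mul_sum]
        apply Finset.sum_congr rfl
        intro k hk
        have hdkv : d k = v := (Finset.mem_filter.mp hk).2
        rw [hdkv]
        push_cast
        ring
      rw [Finset.sum_congr rfl hstep]
      rw [Finset.sum_fiberwise_eq_sum_filter K (K.image d) d
        (fun k => ((d k ^ p : ℝ) : ℂ) * (H i k * (starRingEnd ℂ) (H j k)))]
      rw [Finset.filter_true_of_mem (fun k hk => Finset.mem_image_of_mem d hk)]
      rw [← hA p hp1]
      exact hzero
  -- S3 : orthogonality on K
  have horthK : ∀ i j, ¬ P i j →
      (∑ k ∈ K, H i k * (starRingEnd ℂ) (H j k)) = 0 := by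
    intro i j hP
    have h1 := Finset.sum_fiberwise_eq_sum_filter K (K.image d) d
      (fun k => H i k * (starRingEnd ℂ) (H j k))
    have h2 : K.filter (fun k => d k ∈ K.image d) = K :=
      Finset.filter_true_of_mem (fun k hk => Finset.mem_image_of_mem d hk)
    rw [h2] at h1
    rw [← h1]
    apply Finset.sum_eq_zero
    intro v hv
    exact hfiber i j hP v hv
  -- counting: the quotient by P
  set se : Setoid (Fin r) :=
    ⟨fun a b => P a b, ⟨hPrefl, fun {a b} h => hPsymm h, fun {a b c} h1 h2 => hPtrans h1 h2⟩⟩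
    with hsedef
  have hHinj : Function.Injective H.mulVec := by
    rw [Matrix.mulVec_injective_iff_isUnit, Matrix.isUnit_iff_isUnit_det]
    exact isUnit_iff_ne_zero.mpr hns
  set N : Matrix (Fin r) (↥K) ℂ := fun x k => H x k.val with hNdef
  have hNinj : Function.Injective N.mulVec := by
    intro x y hxy
    have hsub : N.mulVec (x - y) = 0 := by rw [Matrix.mulVec_sub, hxy, sub_self]
    set z : ↥K → ℂ := x - y with hzdef
    suffices hz0 : z = 0 by
      rwa [hzdef, sub_eq_zero] at hz0
    set z' : Fin r → ℂ := fun k => if h : k ∈ K then z ⟨k, h⟩ else 0 with hz'def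
    have hHz : H.mulVec z' = 0 := by
      funext a
      have h1 : H.mulVec z' a = ∑ k, H a k * z' k := by
        simp [Matrix.mulVec, dotProduct]
      have h2 : ∑ k, H a k * z' k = ∑ k ∈ K, H a k * z' k := by
        symm
        apply Finset.sum_subset (Finset.subset_univ K)
        intro k _ hk
        simp [hz'def, dif_neg hk]
      have h3 : ∑ k ∈ K, H a k * z' k = ∑ k : ↥K, N a k * z k := by
        rw [← Finset.sum_coe_sort K (fun k => H a k * z' k)]
        apply Finset.sum_congr rfl
        intro k _
        rw [hNdef, hz'def]
        simp only [dif_pos k.2]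
      have h4 : ∑ k : ↥K, N a k * z k = N.mulVec z a := by
        simp [Matrix.mulVec, dotProduct]
      rw [h1, h2, h3, h4, hzdef, hsub]
    have hz' : z' = 0 := by
      apply hHinj
      rw [hHz, Matrix.mulVec_zero]
    funext k
    have : z' k.val = 0 := by rw [hz']; rfl
    rw [hz'def] at this
    simp only [dif_pos k.2] at this
    rw [Pi.zero_apply]
    rw [← this]
  have hclaim2 : K.card ≤ Fintype.card (Quotient se) := by
    have hg : ∀ x : Fin r, N x ∈ Submodule.span ℂ
        (Set.range (fun q : Quotient se => fun k : ↥K => H q.out k)) := by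
      intro x
      have hx : P (Quotient.out (Quotient.mk se x)) x := Quotient.mk_out x
      obtain ⟨z, hz⟩ := hx
      obtain ⟨k0, hk0⟩ := hKne
      have hz0 : z ≠ 0 := by
        intro h
        apply hH0 (Quotient.out (Quotient.mk se x)) k0
        rw [hz k0 hk0, h, zero_mul]
      have hNx : N x = z⁻¹ • (fun k : ↥K => H (Quotient.out (Quotient.mk se x)) k) := by
        funext k
        rw [hNdef]
        simp only [Pi.smul_apply, smul_eq_mul]
        rw [hz k.val k.2]
        field_simp
      rw [hNx]
      exact Submodule.smul_mem _ _ (Submodule.subset_span ⟨Quotient.mk se x, rfl⟩)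
    have := aux_cols_le_classes N hNinj
      (fun q : Quotient se => fun k : ↥K => H q.out k) hg
    rwa [Fintype.card_coe] at this
  have hclaim1 : ∀ v ∈ K.image d,
      Fintype.card (Quotient se) ≤ (K.filter (fun k => d k = v)).card := by
    intro v hv
    obtain ⟨k0, hk0K, hk0v⟩ := Finset.mem_image.mp hv
    haveI : Nonempty ↥(K.filter (fun k => d k = v)) :=
      ⟨⟨k0, Finset.mem_filter.mpr ⟨hk0K, hk0v⟩⟩⟩
    have hdiagF : ∀ q : Quotient se,
        ∑ k : ↥(K.filter (fun k => d k = v)), H q.out k * (starRingEnd ℂ) (H q.out k) =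
        (Fintype.card ↥(K.filter (fun k => d k = v)) : ℂ) := by
      intro q
      calc ∑ k : ↥(K.filter (fun k => d k = v)), H q.out k * (starRingEnd ℂ) (H q.out k)
          = ∑ _k : ↥(K.filter (fun k => d k = v)), (1:ℂ) :=
            Finset.sum_congr rfl (fun k _ => hmulconj q.out ↑k)
        _ = (Fintype.card ↥(K.filter (fun k => d k = v)) : ℂ) := by
            rw [Finset.sum_const, Finset.card_univ, nsmul_eq_mul, mul_one]
    have horthF : ∀ q q' : Quotient se, q ≠ q' →
        ∑ k : ↥(K.filter (fun k => d k = v)), H q.out k * (starRingEnd ℂ) (H q'.out k) = 0 := by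
      intro q q' hqq'
      have hP : ¬ P q.out q'.out := by
        intro hP
        apply hqq'
        calc q = Quotient.mk se q.out := (Quotient.out_eq q).symm
          _ = Quotient.mk se q'.out := Quotient.sound hP
          _ = q' := Quotient.out_eq q'
      have h0 := hfiber q.out q'.out hP v hv
      rw [← Finset.sum_coe_sort (K.filter (fun k => d k = v))
        (fun k => H q.out k * (starRingEnd ℂ) (H q'.out k))] at h0
      exact h0
    have := aux_classes_le_card (fun q : Quotient se =>
      fun k : ↥(K.filter (fun k => d k = v)) => H q.out k) hdiagF horthF
    rwa [Fintype.card_coe] at this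
  have hKcard_pos : 0 < K.card := Finset.card_pos.mpr hKne
  have hsum : K.card = ∑ v ∈ K.image d, (K.filter (fun k => d k = v)).card :=
    Finset.card_eq_sum_card_fiberwise (fun x hx => Finset.mem_image_of_mem d hx)
  have hbig : (K.image d).card * K.card ≤ K.card := by
    calc (K.image d).card * K.card = ∑ _v ∈ K.image d, K.card := by
          rw [Finset.sum_const, smul_eq_mul]
      _ ≤ ∑ v ∈ K.image d, (K.filter (fun k => d k = v)).card :=
          Finset.sum_le_sum (fun v hv => le_trans hclaim2 (hclaim1 v hv))
      _ = K.card := hsum.symm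
  have himg1 : (K.image d).card = 1 := by
    have h1 : (K.image d).card ≤ 1 := by
      by_contra h
      push_neg at h
      nlinarith [hKcard_pos, hbig]
    exact le_antisymm h1 (Finset.card_pos.mpr (hKne.image d))
  obtain ⟨u, hu⟩ := Finset.card_eq_one.mp himg1
  constructor
  · refine ⟨u, fun k => ?_⟩
    by_cases hk : d k = 0
    · exact Or.inl hk
    · right
      have hkK : k ∈ K := by rw [hKdef]; simp [hk]
      have hmem : d k ∈ K.image d := Finset.mem_image_of_mem d hkK
      rw [hu, Finset.mem_singleton] at hmem
      exact hmem
  · intro I hIcard hlin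
    apply Matrix.ext
    intro a b
    have hentry : ((H.submatrix (fun i : ↥I => (i : Fin r)) (fun k : ↥K => (k : Fin r))) *
        (H.submatrix (fun i : ↥I => (i : Fin r))
          (fun k : ↥K => (k : Fin r))).conjTranspose) a b =
        ∑ k : ↥K, H ↑a ↑k * (starRingEnd ℂ) (H ↑b ↑k) := by
      rw [Matrix.mul_apply]
      apply Finset.sum_congr rfl
      intro k _
      rw [Matrix.conjTranspose_apply, Matrix.submatrix_apply, Matrix.submatrix_apply,
        Complex.star_def]
    by_cases hab : a = b
    · subst hab
      rw [hentry]
      simp only [hmulconj]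
      rw [Matrix.smul_apply, Matrix.one_apply_eq, smul_eq_mul, mul_one]
      simp
    · have hPab : ¬ P ↑a ↑b := by
        rintro ⟨z, hz⟩
        set g : ↥I → ℂ := fun t => if t = a then (1:ℂ) else -z with hgdef
        have hga : g a = 1 := by rw [hgdef]; simp
        have hgb : g b = -z := by
          rw [hgdef]
          exact if_neg (fun h => hab h.symm)
        have hsum0 : ∑ t ∈ ({a, b} : Finset ↥I), g t • (fun k : ↥K => H ↑t ↑k) = 0 := by
          rw [Finset.sum_pair hab, hga, hgb]
          funext k
          simp only [Pi.add_apply, Pi.smul_apply, Pi.zero_apply, smul_eq_mul, one_mul,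
            neg_mul]
          rw [hz k.val k.2]
          ring
        have h1 := linearIndependent_iff'.mp hlin ({a, b} : Finset ↥I) g hsum0 a
          (Finset.mem_insert_self a {b})
        rw [hga] at h1
        exact one_ne_zero h1
      rw [hentry]
      have h0 := horthK ↑a ↑b hPab
      have hne : (a : Fin r) ≠ (b : Fin r) := fun h => hab (Subtype.ext h)
      rw [Matrix.smul_apply, Matrix.one_apply_ne hab, smul_zero]
      rw [Finset.sum_coe_sort K (fun k => H ↑a k * (starRingEnd ℂ) (H ↑b k))]
      exact h0
end

section
/- Let A ∈ ℂ^{m×m} be Hermitian with twin equivalence classes I_1, ..., I_k (rows equal iff in the same class), twin resolvent Ã (the k×k matrix with Ã_{ij} = A_{μν} for μ ∈ I_i, ν ∈ I_j) and twin resolution map τ: [m] → [k] with μ ∈ I_{τ(μ)}. Let D be a diagonal matrix and D̃ the diagonal k×k matrix with D̃_{ii} = Σ_{ν ∈ I_i} D_{νν}. Then for every finite directed multigraph G, Z_{A,D}(G) = Z_{Ã,D̃}(G). -/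
/-- The partition function of a directed multigraph (vertices `V`, edges `E`
with source `s` and target `t`) with edge weights `A` and vertex weights `d`. -/
noncomputable def pfZ {V E S : Type*} [Fintype V] [Fintype E] [Fintype S] [DecidableEq V]
    (s t : E → V) (A : Matrix S S ℂ) (d : S → ℂ) : ℂ :=
  ∑ σ : V → S, (∏ e, A (σ (s e)) (σ (t e))) * ∏ v, d (σ v)

theorem stmt18 {V E : Type*} [Fintype V] [Fintype E] [DecidableEq V]
    (s t : E → V) (m k : ℕ)
    (A : Matrix (Fin m) (Fin m) ℂ) (hA : A.IsHermitian)
    (τ : Fin m → Fin k) (hsurj : Function.Surjective τ)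
    (htwin : ∀ i j : Fin m, τ i = τ j ↔ A i = A j)
    (At : Matrix (Fin k) (Fin k) ℂ)
    (hAt : ∀ i j : Fin m, At (τ i) (τ j) = A i j)
    (d : Fin m → ℂ) (dt : Fin k → ℂ)
    (hdt : ∀ c : Fin k, dt c = ∑ ν ∈ Finset.univ.filter (fun ν => τ ν = c), d ν) :
    pfZ s t A d = pfZ s t At dt := by
  classical
  unfold pfZ
  rw [← Finset.sum_fiberwise Finset.univ (fun σ : V → Fin m => τ ∘ σ)
      (fun σ => (∏ e, A (σ (s e)) (σ (t e))) * ∏ v, d (σ v))]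
  refine Finset.sum_congr rfl fun σt _ => ?_
  have hmem : ∀ σ : V → Fin m,
      σ ∈ Finset.univ.filter (fun σ : V → Fin m => τ ∘ σ = σt) ↔ ∀ v, τ (σ v) = σt v := by
    intro σ
    simp [funext_iff]
  have key : ∀ σ ∈ Finset.univ.filter (fun σ : V → Fin m => τ ∘ σ = σt),
      (∏ e, A (σ (s e)) (σ (t e))) * ∏ v, d (σ v)
        = (∏ e, At (σt (s e)) (σt (t e))) * ∏ v, d (σ v) := by
    intro σ hσ
    have h := (hmem σ).1 hσ
    congr 1
    refine Finset.prod_congr rfl fun e _ => ?_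
    rw [← hAt (σ (s e)) (σ (t e)), h, h]
  rw [Finset.sum_congr rfl key, ← Finset.mul_sum]
  congr 1
  -- remaining: ∑ σ in fiber, ∏ v, d (σ v) = ∏ v, dt (σt v)
  have : ∀ v : V, dt (σt v) = ∑ ν ∈ Finset.univ.filter (fun ν => τ ν = σt v), d ν :=
    fun v => hdt (σt v)
  calc ∑ σ ∈ Finset.univ.filter (fun σ : V → Fin m => τ ∘ σ = σt), ∏ v, d (σ v)
      = ∑ σ ∈ Fintype.piFinset (fun v => Finset.univ.filter (fun ν => τ ν = σt v)),
          ∏ v, d (σ v) := by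
        refine Finset.sum_congr ?_ fun _ _ => rfl
        ext σ
        simp [Fintype.mem_piFinset, funext_iff]
    _ = ∏ v, ∑ ν ∈ Finset.univ.filter (fun ν => τ ν = σt v), d ν :=
        (Finset.prod_univ_sum _ _).symm
    _ = ∏ v, dt (σt v) := by
        exact Finset.prod_congr rfl fun v _ => (hdt (σt v)).symm
end
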